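/- Half of Theorem 1 (primal bound): for any parameters (φ̄, γ̄') with ∑_r φ̄_r A_r + diag(γ̄') ⪰ 0 and each λ_r := λ_min(A_r) ≤ 0 and λ'_r := λ_min(-A_r) ≤ 0, and for any feasible solution (ȳ, Ȳ, X̄) of the rank relaxation (SDP) (i.e., ⟨A_r, X̄⟩ + a_rᵀȳ = b_r for all r, the diagonal magnitude bounds on X̄ hold, y-box bounds hold, [[1, ȳᵀ],[ȳ, Ȳ]] ⪰ 0, and X̄ ⪰ 0), the point (x, y, z) = (0, ȳ, diag-vector of X̄) is feasible for the convex relaxation (OPF̄_{φ̄,γ̄'}) and its objective value h_{φ̄,γ̄'}(0, ȳ, D(X̄)) is at most the SDP objective ∑ᵢ(Cᵢᵢ Ȳᵢᵢ + cᵢ ȳᵢ). Hence v(OPF̄_{φ̄,γ̄'}) ≤ v(SDP). -/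

import Mathlib

/-!
At `x = 0` the convexified constraints follow from the SDP equalities through
`⟨A, X̄⟩ ≥ λ_min(A) tr X̄`, which holds because `A - λ_min(A) I` and `X̄` are both positive
semidefinite. In the objective the penalty terms sum to `-⟨∑ φ_r A_r + diag γ', X̄⟩ ≤ 0`, again a
trace of a product of two positive semidefinite matrices, and the Schur complement of the block
matrix gives `ȳ_i² ≤ Ȳ_ii`.
-/

open Matrix

noncomputable def lmin {ι : Type*} [Fintype ι] [DecidableEq ι] [Nonempty ι]
    {A : Matrix ι ι ℝ} (hA : A.IsHermitian) : ℝ := ⨅ i, hA.eigenvalues i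

section TraceBounds

variable {ι : Type*} [Fintype ι] [DecidableEq ι]

open scoped ComplexOrder MatrixOrder in
theorem Matrix.PosSemidef.trace_mul_nonneg {𝕜 : Type*} [RCLike 𝕜] {S X : Matrix ι ι 𝕜}
    (hS : S.PosSemidef) (hX : X.PosSemidef) : 0 ≤ (S * X).trace := by
  obtain ⟨B, rfl⟩ := CStarAlgebra.nonneg_iff_eq_star_mul_self.mp hX.nonneg
  rw [star_eq_conjTranspose, ← Matrix.mul_assoc, Matrix.trace_mul_comm, ← Matrix.mul_assoc]
  exact (hS.mul_mul_conjTranspose_same B).trace_nonneg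

variable [Nonempty ι]

open scoped MatrixOrder in
theorem Matrix.IsHermitian.posSemidef_sub_lmin_smul_one {A : Matrix ι ι ℝ}
    (hA : A.IsHermitian) : (A - lmin hA • 1).PosSemidef := by
  have hle : algebraMap ℝ _ (lmin hA) ≤ A := by
    refine algebraMap_le_of_le_spectrum (fun x hx => ?_) hA.isSelfAdjoint
    obtain ⟨_, ⟨i, rfl⟩, rfl⟩ := hA.spectrum_eq_image_range ▸ hx
    exact ciInf_le (Set.finite_range _).bddBelow i
  rwa [Matrix.le_iff, Algebra.algebraMap_eq_smul_one] at hle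

theorem Matrix.IsHermitian.lmin_mul_trace_le {A X : Matrix ι ι ℝ} (hA : A.IsHermitian)
    (hX : X.PosSemidef) : lmin hA * X.trace ≤ (A * X).trace := by
  have h := hA.posSemidef_sub_lmin_smul_one.trace_mul_nonneg hX
  rw [Matrix.sub_mul, Matrix.trace_sub, Matrix.smul_mul, Matrix.one_mul, Matrix.trace_smul,
    smul_eq_mul] at h
  linarith

end TraceBounds

theorem Matrix.trace_sum_smul_add_diagonal_mul {ι κ R : Type*} [Fintype ι] [DecidableEq ι]
    [Fintype κ] [CommSemiring R] (φ : κ → R) (A : κ → Matrix ι ι R) (γ : ι → R)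
    (X : Matrix ι ι R) :
    ((∑ r, φ r • A r + diagonal γ) * X).trace = ∑ r, φ r * (A r * X).trace + ∑ s, γ s * X s s := by
  rw [Matrix.add_mul, Matrix.trace_add, Matrix.sum_mul, Matrix.trace_sum]
  simp only [Matrix.smul_mul, Matrix.trace_smul, smul_eq_mul]
  congr 1
  simp [Matrix.trace]

theorem Matrix.PosSemidef.sq_le_of_fromBlocks_one {m : Type*} [Fintype m] [DecidableEq m]
    {y : m → ℝ} {Y : Matrix m m ℝ}
    (h : (fromBlocks (of fun _ _ : Unit => (1 : ℝ)) (of fun _ j => y j) (of fun i _ => y i)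
      Y).PosSemidef) (i : m) : y i ^ 2 ≤ Y i i := by
  have h' := h.dotProduct_mulVec_nonneg (Sum.elim (fun _ => -y i) (Pi.single i 1))
  simp [mulVec, dotProduct, Pi.single_apply, mul_ite] at h'
  nlinarith

theorem stmt_12_general {n m : ℕ} [NeZero n] {C : Type*} [Fintype C]
    -- data
    (A : C → Matrix (Fin n ⊕ Fin n) (Fin n ⊕ Fin n) ℝ)
    (hA : ∀ r, (A r).IsHermitian)
    (a : C → Fin m → ℝ) (b : C → ℝ)
    (Cd c : Fin m → ℝ) (hCd : ∀ i, 0 ≤ Cd i)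
    (ylo yhi : Fin m → ℝ) (vlo vhi : Fin n → ℝ)
    -- parameters making the reformulation convex
    (φ : C → ℝ) (γ' : (Fin n ⊕ Fin n) → ℝ)
    (hconv : (∑ r, φ r • A r + Matrix.diagonal γ').PosSemidef)
    -- a feasible solution of the rank relaxation (SDP)
    (ybar : Fin m → ℝ) (Ybar : Matrix (Fin m) (Fin m) ℝ)
    (Xbar : Matrix (Fin n ⊕ Fin n) (Fin n ⊕ Fin n) ℝ)
    (heq : ∀ r, (A r * Xbar).trace + a r ⬝ᵥ ybar = b r)
    (hmag : ∀ i : Fin n, vlo i ≤ Xbar (Sum.inl i) (Sum.inl i) + Xbar (Sum.inr i) (Sum.inr i) ∧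
        Xbar (Sum.inl i) (Sum.inl i) + Xbar (Sum.inr i) (Sum.inr i) ≤ vhi i)
    (hbox : ∀ i, ylo i ≤ ybar i ∧ ybar i ≤ yhi i)
    (hblock : (Matrix.fromBlocks (Matrix.of fun _ _ : Unit => (1 : ℝ))
        (Matrix.of fun _ j => ybar j) (Matrix.of fun i _ => ybar i) Ybar).PosSemidef)
    (hXpsd : Xbar.PosSemidef) :
    -- the lifted point (x, y, z) = (0, ȳ, D(X̄))
    (∀ r, (0 : (Fin n ⊕ Fin n) → ℝ) ⬝ᵥ (A r).mulVec 0 + a r ⬝ᵥ ybar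
        - lmin (hA r) * ∑ s, ((0 : (Fin n ⊕ Fin n) → ℝ) s ^ 2 - Xbar s s) ≤ b r) ∧
    (∀ r, -((0 : (Fin n ⊕ Fin n) → ℝ) ⬝ᵥ (A r).mulVec 0) - a r ⬝ᵥ ybar
        - lmin (hA r).neg * ∑ s, ((0 : (Fin n ⊕ Fin n) → ℝ) s ^ 2 - Xbar s s) ≤ -(b r)) ∧
    (∀ i : Fin n, vlo i ≤ Xbar (Sum.inl i) (Sum.inl i) + Xbar (Sum.inr i) (Sum.inr i) ∧
        Xbar (Sum.inl i) (Sum.inl i) + Xbar (Sum.inr i) (Sum.inr i) ≤ vhi i) ∧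
    (∀ i, ylo i ≤ ybar i ∧ ybar i ≤ yhi i) ∧
    (∀ s, ((0 : (Fin n ⊕ Fin n) → ℝ) s) ^ 2 ≤ Xbar s s ∧
        Xbar s s ≤ (Real.sqrt (Sum.elim vhi vhi s) + (-Real.sqrt (Sum.elim vhi vhi s)))
              * (0 : (Fin n ⊕ Fin n) → ℝ) s
            - Real.sqrt (Sum.elim vhi vhi s) * (-Real.sqrt (Sum.elim vhi vhi s))) ∧
    -- objective comparison : h_{φ,γ'}(0, ȳ, D(X̄)) ≤ SDP objective
    ((∑ i, (Cd i * ybar i ^ 2 + c i * ybar i)) +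
      (∑ r, φ r * ((0 : (Fin n ⊕ Fin n) → ℝ) ⬝ᵥ (A r).mulVec 0 + a r ⬝ᵥ ybar - b r)) +
      (∑ s, γ' s * (((0 : (Fin n ⊕ Fin n) → ℝ) s) ^ 2 - Xbar s s)) ≤
      ∑ i, (Cd i * Ybar i i + c i * ybar i)) := by
  have hdiag : ∀ s, 0 ≤ Xbar s s := fun s => hXpsd.diag_nonneg
  have hzero_sq_sub : ∑ s, ((0 : (Fin n ⊕ Fin n) → ℝ) s ^ 2 - Xbar s s) = -Xbar.trace := by
    simp [Matrix.trace]
  have hdiag_le : ∀ s, Xbar s s ≤ Sum.elim vhi vhi s := by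
    rintro (i | i) <;> simp only [Sum.elim_inl, Sum.elim_inr] <;>
      linarith [(hmag i).2, hdiag (Sum.inl i), hdiag (Sum.inr i)]
  refine ⟨fun r => ?_, fun r => ?_, hmag, hbox, fun s => ⟨?_, ?_⟩, ?_⟩
  · have := (hA r).lmin_mul_trace_le hXpsd
    simp only [zero_dotProduct, zero_add, hzero_sq_sub]
    linarith [heq r]
  · have := (hA r).neg.lmin_mul_trace_le hXpsd
    rw [Matrix.neg_mul, Matrix.trace_neg] at this
    simp only [zero_dotProduct, neg_zero, zero_sub, hzero_sq_sub]
    linarith [heq r]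
  · simpa using hdiag s
  · have hv : Real.sqrt (Sum.elim vhi vhi s) * Real.sqrt (Sum.elim vhi vhi s)
        = Sum.elim vhi vhi s := Real.mul_self_sqrt ((hdiag s).trans (hdiag_le s))
    simpa [hv] using hdiag_le s
  · have hφ : ∀ r, a r ⬝ᵥ ybar - b r = -(A r * Xbar).trace := fun r => by linarith [heq r]
    have hpenalty : ∑ r, φ r * ((0 : (Fin n ⊕ Fin n) → ℝ) ⬝ᵥ (A r).mulVec 0 + a r ⬝ᵥ ybar - b r)
        + ∑ s, γ' s * ((0 : (Fin n ⊕ Fin n) → ℝ) s ^ 2 - Xbar s s)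
        = -((∑ r, φ r • A r + diagonal γ') * Xbar).trace := by
      simp only [trace_sum_smul_add_diagonal_mul, zero_dotProduct, zero_add, hφ, Pi.zero_apply,
        zero_pow two_ne_zero, zero_sub, mul_neg, Finset.sum_neg_distrib]
      ring
    have hobj : ∑ i, (Cd i * ybar i ^ 2 + c i * ybar i)
        ≤ ∑ i, (Cd i * Ybar i i + c i * ybar i) := by
      gcongr with i
      exacts [hCd i, hblock.sq_le_of_fromBlocks_one i]
    linarith [hconv.trace_mul_nonneg hXpsd]

/-- Primal half of Theorem 1: from any feasible solution `(ȳ, Ȳ, X̄)` of the rank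
relaxation (SDP), the point `(x, y, z) = (0, ȳ, diag X̄)` is feasible for the compact
quadratic convex relaxation and its objective value is at most the SDP objective. -/
theorem stmt_12 {n m : ℕ} [NeZero n] {C : Type*} [Fintype C]
    -- data
    (A : C → Matrix (Fin n ⊕ Fin n) (Fin n ⊕ Fin n) ℝ)
    (hA : ∀ r, (A r).IsHermitian)
    (a : C → Fin m → ℝ) (b : C → ℝ)
    (Cd c : Fin m → ℝ) (hCd : ∀ i, 0 ≤ Cd i)
    (ylo yhi : Fin m → ℝ) (vlo vhi : Fin n → ℝ)
    -- parameters making the reformulation convex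
    (φ : C → ℝ) (γ' : (Fin n ⊕ Fin n) → ℝ)
    (hconv : (∑ r, φ r • A r + Matrix.diagonal γ').PosSemidef)
    (hlam : ∀ r, lmin (hA r) ≤ 0 ∧ lmin (hA r).neg ≤ 0)
    -- a feasible solution of the rank relaxation (SDP)
    (ybar : Fin m → ℝ) (Ybar : Matrix (Fin m) (Fin m) ℝ)
    (Xbar : Matrix (Fin n ⊕ Fin n) (Fin n ⊕ Fin n) ℝ)
    (heq : ∀ r, (A r * Xbar).trace + a r ⬝ᵥ ybar = b r)
    (hmag : ∀ i : Fin n, vlo i ≤ Xbar (Sum.inl i) (Sum.inl i) + Xbar (Sum.inr i) (Sum.inr i) ∧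
        Xbar (Sum.inl i) (Sum.inl i) + Xbar (Sum.inr i) (Sum.inr i) ≤ vhi i)
    (hbox : ∀ i, ylo i ≤ ybar i ∧ ybar i ≤ yhi i)
    (hblock : (Matrix.fromBlocks (Matrix.of fun _ _ : Unit => (1 : ℝ))
        (Matrix.of fun _ j => ybar j) (Matrix.of fun i _ => ybar i) Ybar).PosSemidef)
    (hXpsd : Xbar.PosSemidef) :
    -- the lifted point (x, y, z) = (0, ȳ, D(X̄))
    (∀ r, (0 : (Fin n ⊕ Fin n) → ℝ) ⬝ᵥ (A r).mulVec 0 + a r ⬝ᵥ ybar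
        - lmin (hA r) * ∑ s, ((0 : (Fin n ⊕ Fin n) → ℝ) s ^ 2 - Xbar s s) ≤ b r) ∧
    (∀ r, -((0 : (Fin n ⊕ Fin n) → ℝ) ⬝ᵥ (A r).mulVec 0) - a r ⬝ᵥ ybar
        - lmin (hA r).neg * ∑ s, ((0 : (Fin n ⊕ Fin n) → ℝ) s ^ 2 - Xbar s s) ≤ -(b r)) ∧
    (∀ i : Fin n, vlo i ≤ Xbar (Sum.inl i) (Sum.inl i) + Xbar (Sum.inr i) (Sum.inr i) ∧
        Xbar (Sum.inl i) (Sum.inl i) + Xbar (Sum.inr i) (Sum.inr i) ≤ vhi i) ∧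
    (∀ i, ylo i ≤ ybar i ∧ ybar i ≤ yhi i) ∧
    (∀ s, ((0 : (Fin n ⊕ Fin n) → ℝ) s) ^ 2 ≤ Xbar s s ∧
        Xbar s s ≤ (Real.sqrt (Sum.elim vhi vhi s) + (-Real.sqrt (Sum.elim vhi vhi s)))
              * (0 : (Fin n ⊕ Fin n) → ℝ) s
            - Real.sqrt (Sum.elim vhi vhi s) * (-Real.sqrt (Sum.elim vhi vhi s))) ∧
    -- objective comparison : h_{φ,γ'}(0, ȳ, D(X̄)) ≤ SDP objective
    ((∑ i, (Cd i * ybar i ^ 2 + c i * ybar i)) +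
      (∑ r, φ r * ((0 : (Fin n ⊕ Fin n) → ℝ) ⬝ᵥ (A r).mulVec 0 + a r ⬝ᵥ ybar - b r)) +
      (∑ s, γ' s * (((0 : (Fin n ⊕ Fin n) → ℝ) s) ^ 2 - Xbar s s)) ≤
      ∑ i, (Cd i * Ybar i i + c i * ybar i)) :=
  stmt_12_general A hA a b Cd c hCd ylo yhi vlo vhi φ γ' hconv ybar Ybar Xbar heq hmag hbox hblock
    hXpsd
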